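/- Let G act linearly and isometrically on a Hilbert space M, let X = t₀ + σε with σ > 0, E(ε) = 0, E‖ε‖² = 1, and suppose m⋆ is a global minimizer of F(m) = E(inf_g ‖g·X − m‖²). Then, writing ν(m) = E(sup_g ⟨g·ε, m/‖m‖⟩) for m ≠ 0 and ν(0) = 0, one has d_Q([m⋆],[t₀])² ≤ 2σν(m⋆)(d_Q([m⋆],[t₀]) + ‖t₀‖), and consequently d_Q([m⋆],[t₀]) ≤ σν(m⋆) + sqrt(σ²ν(m⋆)² + 2‖t₀‖σν(m⋆)). -/

import Mathlib

open MeasureTheory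

/-!
At the minimizer, `F(m⋆) ≤ F(t₀) ≤ σ²` (take `g = 1`). Expanding `‖g • (t₀ + σε) - m⋆‖²` and
bounding `⟪g • ε, m⋆⟫` by its supremum over `g` gives
`F(m⋆) ≥ d_Q([m⋆],[t₀])² + σ² - 2σ‖m⋆‖ν(m⋆)`, hence `d² ≤ 2σ‖m⋆‖ν(m⋆)`. Since
`‖m⋆‖ ≤ d + ‖t₀‖` and `ν(m⋆) ≥ E⟪ε, m⋆/‖m⋆‖⟫ = 0`, this is the first claim; the second is the
solution of this quadratic inequality in `d`.
-/

lemma sq_ciInf_of_nonneg {ι : Sort*} [Nonempty ι] {f : ι → ℝ} (hf : ∀ i, 0 ≤ f i) :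
    (⨅ i, f i) ^ 2 = ⨅ i, f i ^ 2 := by
  -- squaring is monotone only on `[0, ∞)`, so pass through the monotone `x ↦ max x 0 ^ 2`
  have hmono : Monotone fun x : ℝ => max x 0 ^ 2 := fun a b hab =>
    pow_le_pow_left₀ (le_max_right _ _) (max_le_max_right 0 hab) 2
  have h := hmono.map_ciInf_of_continuousAt (g := f) (Continuous.continuousAt (by fun_prop))
    ⟨0, Set.forall_mem_range.2 hf⟩
  simpa only [max_eq_left (le_ciInf hf), fun i => max_eq_left (hf i)] using h

lemma le_add_sqrt_of_sq_le_two_mul_add {d a b : ℝ} (h : d ^ 2 ≤ 2 * a * (d + b)) :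
    d ≤ a + √(a ^ 2 + 2 * b * a) := by
  have := Real.abs_le_sqrt (x := d - a) (y := a ^ 2 + 2 * b * a) (by nlinarith)
  linarith [le_abs_self (d - a)]

section QuotientDist

variable (G : Type*) {M : Type*} [Group G] [NormedAddCommGroup M] [MulAction G M]

noncomputable def quotientDist (a b : M) : ℝ := ⨅ g : G, ‖g • a - b‖

variable {G}

lemma quotientDist_nonneg (a b : M) : 0 ≤ quotientDist G a b :=
  Real.iInf_nonneg fun _ => norm_nonneg _

lemma quotientDist_le_norm (g : G) (a b : M) : quotientDist G a b ≤ ‖g • a - b‖ :=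
  ciInf_le ⟨0, Set.forall_mem_range.2 fun _ => norm_nonneg _⟩ g

lemma sq_quotientDist (a b : M) : quotientDist G a b ^ 2 = ⨅ g : G, ‖g • a - b‖ ^ 2 :=
  sq_ciInf_of_nonneg fun _ => norm_nonneg _

lemma norm_le_quotientDist_add_norm (hiso : ∀ (g : G) (x : M), ‖g • x‖ = ‖x‖) (a b : M) :
    ‖a‖ ≤ quotientDist G a b + ‖b‖ := by
  rw [← sub_le_iff_le_add]
  refine le_ciInf fun g => ?_
  simpa only [hiso] using norm_sub_norm_le (g • a) b

variable [NormedSpace ℝ M]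

lemma norm_smul_sub_smul (hlin : ∀ g : G, IsLinearMap ℝ fun x : M => g • x)
    (hiso : ∀ (g : G) (x : M), ‖g • x‖ = ‖x‖) (g : G) (a b : M) :
    ‖g • a - g • b‖ = ‖a - b‖ := by
  rw [← (hlin g).map_sub, hiso]

lemma quotientDist_comm (hlin : ∀ g : G, IsLinearMap ℝ fun x : M => g • x)
    (hiso : ∀ (g : G) (x : M), ‖g • x‖ = ‖x‖) (a b : M) :
    quotientDist G a b = quotientDist G b a := by
  have h : ∀ g : G, ‖g⁻¹ • b - a‖ = ‖g • a - b‖ := fun g => by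
    rw [← norm_smul_sub_smul hlin hiso g, smul_inv_smul, norm_sub_rev]
  simp only [quotientDist, ← h]
  exact (Equiv.inv G).iInf_comp (g := fun g => ‖g • b - a‖)

lemma lipschitzWith_quotientDist (hlin : ∀ g : G, IsLinearMap ℝ fun x : M => g • x)
    (hiso : ∀ (g : G) (x : M), ‖g • x‖ = ‖x‖) (m : M) :
    LipschitzWith 1 fun x => quotientDist G x m := by
  refine LipschitzWith.of_le_add fun x y => ?_
  rw [← sub_le_iff_le_add]
  refine le_ciInf fun g => ?_
  rw [sub_le_iff_le_add']
  calc quotientDist G x m ≤ ‖g • x - m‖ := quotientDist_le_norm g x m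
    _ ≤ ‖g • x - g • y‖ + ‖g • y - m‖ := norm_sub_le_norm_sub_add_norm_sub _ _ _
    _ = dist x y + ‖g • y - m‖ := by rw [norm_smul_sub_smul hlin hiso, dist_eq_norm]

end QuotientDist

open scoped RealInnerProductSpace

section QuotientVariance

variable (G : Type*) {M Ω : Type*} [Group G] [NormedAddCommGroup M] [MulAction G M]
  [MeasurableSpace Ω]

noncomputable def quotientVariance (μ : Measure Ω) (X : Ω → M) (m : M) : ℝ :=
  ∫ ω, ⨅ g : G, ‖g • X ω - m‖ ^ 2 ∂μ

variable {G} {μ : Measure Ω}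

lemma quotientVariance_le_integral_norm_sub_sq {X : Ω → M} {m : M}
    (hX : Integrable (fun ω => ‖X ω - m‖ ^ 2) μ) :
    quotientVariance G μ X m ≤ ∫ ω, ‖X ω - m‖ ^ 2 ∂μ := by
  refine integral_mono_of_nonneg (.of_forall fun ω => ?_) hX (.of_forall fun ω => ?_)
  · exact Real.iInf_nonneg fun _ => sq_nonneg _
  · dsimp only
    rw [← sq_quotientDist]
    exact pow_le_pow_left₀ (quotientDist_nonneg _ _)
      (by simpa using quotientDist_le_norm (1 : G) (X ω) m) 2

variable [InnerProductSpace ℝ M]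

lemma integrable_iInf_norm_smul_sub_sq [IsFiniteMeasure μ]
    (hlin : ∀ g : G, IsLinearMap ℝ fun x : M => g • x)
    (hiso : ∀ (g : G) (x : M), ‖g • x‖ = ‖x‖) {X : Ω → M} (hX : MemLp X 2 μ) (m : M) :
    Integrable (fun ω => ⨅ g : G, ‖g • X ω - m‖ ^ 2) μ := by
  simp only [← sq_quotientDist]
  have hmeas : AEStronglyMeasurable (fun ω => quotientDist G (X ω) m) μ :=
    (lipschitzWith_quotientDist hlin hiso m).continuous.comp_aestronglyMeasurable hX.1
  refine (MemLp.of_le (hX.sub (memLp_const m)) hmeas (.of_forall fun ω => ?_)).integrable_sq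
  rw [Real.norm_of_nonneg (quotientDist_nonneg _ _)]
  simpa using quotientDist_le_norm (1 : G) (X ω) m

lemma norm_smul_add_smul_sub_sq (hlin : ∀ g : G, IsLinearMap ℝ fun x : M => g • x)
    (hiso : ∀ (g : G) (x : M), ‖g • x‖ = ‖x‖) (g : G) (σ : ℝ) (t e m : M) :
    ‖g • (t + σ • e) - m‖ ^ 2
      = ‖g • t - m‖ ^ 2 + 2 * σ * ⟪t, e⟫ + σ ^ 2 * ‖e‖ ^ 2 - 2 * σ * ⟪g • e, m⟫ := by
  rw [norm_sub_sq_real, norm_sub_sq_real, hiso, hiso, (hlin g).map_add, (hlin g).map_smul,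
    inner_add_left, real_inner_smul_left, norm_add_sq_real, real_inner_smul_right, norm_smul,
    Real.norm_eq_abs, mul_pow, sq_abs]
  ring

lemma sq_quotientDist_add_sub_le_iInf (hlin : ∀ g : G, IsLinearMap ℝ fun x : M => g • x)
    (hiso : ∀ (g : G) (x : M), ‖g • x‖ = ‖x‖) {σ S : ℝ} (hσ : 0 ≤ σ) {t e m : M}
    (hS : ∀ g : G, ⟪g • e, m⟫ ≤ S) :
    quotientDist G m t ^ 2 + 2 * σ * ⟪t, e⟫ + σ ^ 2 * ‖e‖ ^ 2 - 2 * σ * S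
      ≤ ⨅ g : G, ‖g • (t + σ • e) - m‖ ^ 2 := by
  refine le_ciInf fun g => ?_
  rw [norm_smul_add_smul_sub_sq hlin hiso, quotientDist_comm hlin hiso]
  have := pow_le_pow_left₀ (quotientDist_nonneg t m) (quotientDist_le_norm g t m) 2
  nlinarith [mul_le_mul_of_nonneg_left (hS g) (mul_nonneg zero_le_two hσ)]

lemma sq_quotientDist_add_sub_le_quotientVariance [IsProbabilityMeasure μ] [CompleteSpace M]
    (hlin : ∀ g : G, IsLinearMap ℝ fun x : M => g • x)
    (hiso : ∀ (g : G) (x : M), ‖g • x‖ = ‖x‖) {σ : ℝ} (hσ : 0 ≤ σ) {ε : Ω → M}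
    (hε : Integrable ε μ) (hεmean : ∫ ω, ε ω ∂μ = 0)
    (hε2 : Integrable (fun ω => ‖ε ω‖ ^ 2) μ) {t m : M}
    (hbdd : ∀ ω, BddAbove (Set.range fun g : G => ⟪g • ε ω, m⟫))
    (hsup : Integrable (fun ω => ⨆ g : G, ⟪g • ε ω, m⟫) μ) :
    quotientDist G m t ^ 2 + σ ^ 2 * ∫ ω, ‖ε ω‖ ^ 2 ∂μ
        - 2 * σ * ∫ ω, ⨆ g : G, ⟪g • ε ω, m⟫ ∂μ
      ≤ quotientVariance G μ (fun ω => t + σ • ε ω) m := by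
  have hX : MemLp (fun ω => t + σ • ε ω) 2 μ :=
    (memLp_const t).add (((memLp_two_iff_integrable_sq_norm hε.1).2 hε2).const_smul σ)
  have hmean : ∫ ω, quotientDist G m t ^ 2 + 2 * σ * ⟪t, ε ω⟫ + σ ^ 2 * ‖ε ω‖ ^ 2
        - 2 * σ * ⨆ g : G, ⟪g • ε ω, m⟫ ∂μ
      = quotientDist G m t ^ 2 + σ ^ 2 * ∫ ω, ‖ε ω‖ ^ 2 ∂μ
        - 2 * σ * ∫ ω, ⨆ g : G, ⟪g • ε ω, m⟫ ∂μ := by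
    rw [integral_sub (by fun_prop) (by fun_prop), integral_add (by fun_prop) (by fun_prop),
      integral_add (by fun_prop) (by fun_prop), integral_const, integral_const_mul,
      integral_const_mul, integral_const_mul, integral_inner hε, hεmean, inner_zero_right,
      mul_zero, add_zero, probReal_univ, one_smul]
  rw [← hmean]
  exact integral_mono (by fun_prop) (integrable_iInf_norm_smul_sub_sq hlin hiso hX m)
    fun ω => sq_quotientDist_add_sub_le_iInf hlin hiso hσ (le_ciSup (hbdd ω))

end QuotientVariance

section IntegralSupInner

variable {G M Ω : Type*} [Group G] [NormedAddCommGroup M] [InnerProductSpace ℝ M]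
  [MulAction G M] [MeasurableSpace Ω] {μ : Measure Ω}

lemma integral_iSup_inner_smul_right (ε : Ω → M) {c : ℝ} (hc : 0 ≤ c) (m : M) :
    ∫ ω, ⨆ g : G, ⟪g • ε ω, c • m⟫ ∂μ = c * ∫ ω, ⨆ g : G, ⟪g • ε ω, m⟫ ∂μ := by
  simp only [real_inner_smul_right, ← Real.mul_iSup_of_nonneg hc, integral_const_mul]

lemma integral_iSup_inner_nonneg [CompleteSpace M] {ε : Ω → M} (hε : Integrable ε μ)
    (hεmean : ∫ ω, ε ω ∂μ = 0) {m : M}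
    (hbdd : ∀ ω, BddAbove (Set.range fun g : G => ⟪g • ε ω, m⟫))
    (hsup : Integrable (fun ω => ⨆ g : G, ⟪g • ε ω, m⟫) μ) :
    0 ≤ ∫ ω, ⨆ g : G, ⟪g • ε ω, m⟫ ∂μ := by
  have h0 : ∫ ω, ⟪m, ε ω⟫ ∂μ = 0 := by rw [integral_inner hε, hεmean, inner_zero_right]
  rw [← h0]
  refine integral_mono (hε.const_inner m) hsup fun ω => ?_
  rw [real_inner_comm]
  simpa only [one_smul] using le_ciSup (hbdd ω) (1 : G)

end IntegralSupInner

/-- Upper bound of the consistency bias: if `m⋆` globally minimizes the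
quotient variance `F`, then with `ν(m) = E(sup_g ⟨g•ε, m/‖m‖⟩)` (and
`ν(0) = 0`), `d_Q([m⋆],[t₀])² ≤ 2σν(m⋆)(d_Q([m⋆],[t₀]) + ‖t₀‖)` and hence
`d_Q([m⋆],[t₀]) ≤ σν(m⋆) + √(σ²ν(m⋆)² + 2‖t₀‖σν(m⋆))`. -/
theorem stmt14 {M G Ω : Type*} [NormedAddCommGroup M] [InnerProductSpace ℝ M]
    [CompleteSpace M] [Group G] [MulAction G M] [MeasurableSpace Ω]
    (μ : Measure Ω) [IsProbabilityMeasure μ]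
    (hlin : ∀ g : G, IsLinearMap ℝ fun x : M => g • x)
    (hiso : ∀ (g : G) (x : M), ‖g • x‖ = ‖x‖)
    (ε : Ω → M) (t₀ : M) (σ : ℝ) (hσ : 0 < σ)
    (hεint : Integrable ε μ) (hεmean : ∫ ω, ε ω ∂μ = 0)
    (hε2 : (∫ ω, ‖ε ω‖ ^ 2 ∂μ) = 1)
    (hε2int : Integrable (fun ω => ‖ε ω‖ ^ 2) μ)
    (X : Ω → M) (hX : ∀ ω, X ω = t₀ + σ • ε ω)
    (hbdd : ∀ (ω) (m : M), BddAbove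
      (Set.range fun g : G => (inner ℝ (g • ε ω) m : ℝ)))
    (hsup : ∀ m : M, Integrable
      (fun ω => ⨆ g : G, (inner ℝ (g • ε ω) m : ℝ)) μ)
    (ν : M → ℝ) (hν0 : ν 0 = 0)
    (hν : ∀ m : M, m ≠ 0 →
      ν m = ∫ ω, ⨆ g : G, (inner ℝ (g • ε ω) (‖m‖⁻¹ • m) : ℝ) ∂μ)
    (m₀ : M)
    (hmin : ∀ m : M, (∫ ω, ⨅ g : G, ‖g • X ω - m₀‖ ^ 2 ∂μ)
      ≤ ∫ ω, ⨅ g : G, ‖g • X ω - m‖ ^ 2 ∂μ) :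
    (⨅ g : G, ‖g • m₀ - t₀‖) ^ 2
        ≤ 2 * σ * ν m₀ * ((⨅ g : G, ‖g • m₀ - t₀‖) + ‖t₀‖) ∧
    (⨅ g : G, ‖g • m₀ - t₀‖)
        ≤ σ * ν m₀ + Real.sqrt (σ ^ 2 * ν m₀ ^ 2 + 2 * ‖t₀‖ * σ * ν m₀) := by
  obtain rfl : X = fun ω => t₀ + σ • ε ω := funext hX
  change quotientDist G m₀ t₀ ^ 2 ≤ 2 * σ * ν m₀ * (quotientDist G m₀ t₀ + ‖t₀‖) ∧
    quotientDist G m₀ t₀ ≤ σ * ν m₀ + √(σ ^ 2 * ν m₀ ^ 2 + 2 * ‖t₀‖ * σ * ν m₀)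
  have hnoise : ∀ ω, ‖t₀ + σ • ε ω - t₀‖ ^ 2 = σ ^ 2 * ‖ε ω‖ ^ 2 := fun ω => by
    rw [add_sub_cancel_left, norm_smul, mul_pow, Real.norm_eq_abs, sq_abs]
  have hupper : quotientVariance G μ (fun ω => t₀ + σ • ε ω) m₀ ≤ σ ^ 2 :=
    calc _ ≤ quotientVariance G μ (fun ω => t₀ + σ • ε ω) t₀ := hmin t₀
      _ ≤ ∫ ω, ‖t₀ + σ • ε ω - t₀‖ ^ 2 ∂μ := quotientVariance_le_integral_norm_sub_sq
        (by simpa only [hnoise] using hε2int.const_mul (σ ^ 2))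
      _ = σ ^ 2 := by simp only [hnoise, integral_const_mul, hε2, mul_one]
  have hlower := sq_quotientDist_add_sub_le_quotientVariance hlin hiso hσ.le hεint hεmean
    hε2int (t := t₀) (hbdd · m₀) (hsup m₀)
  have hν_m₀ : ∫ ω, ⨆ g : G, ⟪g • ε ω, m₀⟫ ∂μ = ‖m₀‖ * ν m₀ ∧ 0 ≤ ν m₀ := by
    rcases eq_or_ne m₀ 0 with rfl | hm
    · simp [hν0]
    · rw [hν m₀ hm, integral_iSup_inner_smul_right _ (inv_nonneg.2 (norm_nonneg _)),
        ← mul_assoc, mul_inv_cancel₀ (norm_ne_zero_iff.2 hm), one_mul]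
      exact ⟨rfl, mul_nonneg (inv_nonneg.2 (norm_nonneg _))
        (integral_iSup_inner_nonneg hεint hεmean (hbdd · m₀) (hsup m₀))⟩
  obtain ⟨hν_eq, hν_nonneg⟩ := hν_m₀
  have hnorm := norm_le_quotientDist_add_norm hiso m₀ t₀
  rw [hε2, hν_eq] at hlower
  have key : quotientDist G m₀ t₀ ^ 2 ≤ 2 * σ * ν m₀ * (quotientDist G m₀ t₀ + ‖t₀‖) := by
    nlinarith [mul_le_mul_of_nonneg_left hnorm (by positivity : 0 ≤ 2 * σ * ν m₀)]
  refine ⟨key, ?_⟩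
  convert le_add_sqrt_of_sq_le_two_mul_add (d := quotientDist G m₀ t₀) (a := σ * ν m₀)
    (b := ‖t₀‖) (by linarith) using 3
  ring
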